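/- If T : L^n → M is a symmetric lattice n-homomorphism between distributive lattices (n ≥ 2), then for all x_1,...,x_n ∈ L: T(x_1,x_1,x_3,...,x_n) ∧ T(x_2,x_2,x_3,...,x_n) ≤ T(x_1,x_2,x_3,...,x_n) ≤ T(x_1,x_1,x_3,...,x_n) ∨ T(x_2,x_2,x_3,...,x_n). -/

import Mathlib

def median {L : Type*} [DistribLattice L] {n : ℕ} (k : ℕ) (hk1 : 1 ≤ k) (hkn : k ≤ n)
    (x : Fin n → L) : L :=
  ((Finset.univ.powersetCard (n + 1 - k)).attach).sup'
    (Finset.attach_nonempty_iff.mpr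
      (Finset.powersetCard_nonempty.mpr (by simp [Finset.card_univ]; omega)))
    fun s => s.1.inf'
      (Finset.card_pos.mp (by
        have h := (Finset.mem_powersetCard.mp s.2).2
        omega)) x

def medianInf {L : Type*} [DistribLattice L] {n : ℕ} (k : ℕ) (hk1 : 1 ≤ k) (hkn : k ≤ n)
    (x : Fin n → L) : L :=
  ((Finset.univ.powersetCard (n + 1 - k)).attach).inf'
    (Finset.attach_nonempty_iff.mpr
      (Finset.powersetCard_nonempty.mpr (by simp [Finset.card_univ]; omega)))
    fun s => s.1.sup'
      (Finset.card_pos.mp (by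
        have h := (Finset.mem_powersetCard.mp s.2).2
        omega)) x
def TotalOrderizationInvariant {L : Type*} [DistribLattice L] {A : Type*} {n : ℕ}
    (T : (Fin n → L) → A) : Prop :=
  ∀ x : Fin n → L,
    T x = T fun k => median (k.1 + 1) (Nat.succ_le_succ (Nat.zero_le _)) k.2 x

/-- `T` is symmetric: invariant under every permutation of its arguments. -/
def IsSymmetricMap {L A : Type*} {n : ℕ} (T : (Fin n → L) → A) : Prop :=
  ∀ (σ : Equiv.Perm (Fin n)) (x : Fin n → L), T (x ∘ σ) = T x
/-- `T : Lⁿ → M` is a lattice n-homomorphism: in each coordinate separately it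
preserves binary joins and binary meets. -/
def IsLatticeMultiHom {L M : Type*} [DistribLattice L] [DistribLattice M] {n : ℕ}
    (T : (Fin n → L) → M) : Prop :=
  ∀ (x : Fin n → L) (i : Fin n) (y : L),
    T (Function.update x i (x i ⊔ y)) = T x ⊔ T (Function.update x i y) ∧
    T (Function.update x i (x i ⊓ y)) = T x ⊓ T (Function.update x i y)

/-- `P : L → M` is a lattice homomorphism. -/
def IsLatticeHomMap {L M : Type*} [DistribLattice L] [DistribLattice M] (P : L → M) : Prop :=
  ∀ a b : L, P (a ⊔ b) = P a ⊔ P b ∧ P (a ⊓ b) = P a ⊓ P b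

/-!
Freezing all but two coordinates of `T` gives a symmetric map `f : L → L → M` that is a lattice
homomorphism in each variable. Expanding the two sides of `f (a ⊔ b) (a ⊓ b) = f (a ⊓ b) (a ⊔ b)`
by distributivity in `M` gives `f a b ⊔ (f a a ⊓ f b b) = f a b ⊓ (f a a ⊔ f b b)`, and
`u ⊔ v = u ⊓ w` forces `v ≤ u ≤ w`.
-/

section TwoVariable

variable {L M : Type*} [Lattice L] [DistribLattice M]

theorem sup_inf_diag_eq_inf_sup_diag {f : L → L → M}
    (hsup : ∀ a b c, f (a ⊔ b) c = f a c ⊔ f b c)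
    (hinf : ∀ a b c, f (a ⊓ b) c = f a c ⊓ f b c)
    (hsymm : ∀ a b, f a b = f b a) (a b : L) :
    f a b ⊔ (f a a ⊓ f b b) = f a b ⊓ (f a a ⊔ f b b) := by
  have hsup' : ∀ a b c, f c (a ⊔ b) = f c a ⊔ f c b := fun a b c => by
    rw [hsymm, hsup, hsymm a, hsymm b]
  have hinf' : ∀ a b c, f c (a ⊓ b) = f c a ⊓ f c b := fun a b c => by
    rw [hsymm, hinf, hsymm a, hsymm b]
  calc f a b ⊔ (f a a ⊓ f b b)
      = f (a ⊔ b) (a ⊓ b) := by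
        rw [hinf', hsup, hsup, hsymm b a, sup_inf_left, sup_comm (f a b) (f a a)]
    _ = f (a ⊓ b) (a ⊔ b) := hsymm _ _
    _ = f a b ⊓ (f a a ⊔ f b b) := by
        rw [hsup', hinf, hinf, hsymm b a, inf_sup_left, inf_comm (f a b) (f a a)]

theorem inf_diag_le_and_le_sup_diag {f : L → L → M}
    (hsup : ∀ a b c, f (a ⊔ b) c = f a c ⊔ f b c)
    (hinf : ∀ a b c, f (a ⊓ b) c = f a c ⊓ f b c)
    (hsymm : ∀ a b, f a b = f b a) (a b : L) :
    f a a ⊓ f b b ≤ f a b ∧ f a b ≤ f a a ⊔ f b b := by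
  have key := sup_inf_diag_eq_inf_sup_diag hsup hinf hsymm a b
  constructor
  · calc f a a ⊓ f b b ≤ f a b ⊔ (f a a ⊓ f b b) := le_sup_right
      _ = f a b ⊓ (f a a ⊔ f b b) := key
      _ ≤ f a b := inf_le_left
  · calc f a b ≤ f a b ⊔ (f a a ⊓ f b b) := le_sup_left
      _ = f a b ⊓ (f a a ⊔ f b b) := key
      _ ≤ f a a ⊔ f b b := inf_le_right

end TwoVariable

open Function

section MultiHom

variable {L M : Type*} [DistribLattice L] [DistribLattice M] {n : ℕ} {T : (Fin n → L) → M}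

theorem IsLatticeMultiHom.map_update_sup (hT : IsLatticeMultiHom T) (x : Fin n → L) (i : Fin n)
    (a b : L) : T (update x i (a ⊔ b)) = T (update x i a) ⊔ T (update x i b) := by
  simpa using (hT (update x i a) i b).1

theorem IsLatticeMultiHom.map_update_inf (hT : IsLatticeMultiHom T) (x : Fin n → L) (i : Fin n)
    (a b : L) : T (update x i (a ⊓ b)) = T (update x i a) ⊓ T (update x i b) := by
  simpa using (hT (update x i a) i b).2

end MultiHom

theorem IsSymmetricMap.map_update_update_comm {L A : Type*} {n : ℕ} {T : (Fin n → L) → A}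
    (hT : IsSymmetricMap T) {i j : Fin n} (hij : i ≠ j) (x : Fin n → L) (a b : L) :
    T (update (update x i a) j b) = T (update (update x i b) j a) := by
  rw [← hT (Equiv.swap i j)]
  congr 1
  ext k
  simp only [comp_apply, update_apply, Equiv.swap_apply_def]
  split_ifs <;> simp_all

theorem IsLatticeMultiHom.inf_le_and_le_sup_of_isSymmetricMap {L M : Type*} [DistribLattice L]
    [DistribLattice M] {n : ℕ} {T : (Fin n → L) → M} (hT : IsLatticeMultiHom T)
    (hsymm : IsSymmetricMap T) {i j : Fin n} (hij : i ≠ j) (x : Fin n → L) :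
    T (update x j (x i)) ⊓ T (update x i (x j)) ≤ T x ∧
      T x ≤ T (update x j (x i)) ⊔ T (update x i (x j)) := by
  have h := inf_diag_le_and_le_sup_diag (f := fun s t => T (update (update x j t) i s))
    (fun a b c => hT.map_update_sup _ i a b) (fun a b c => hT.map_update_inf _ i a b)
    (fun a b => hsymm.map_update_update_comm hij.symm x b a) (x i) (x j)
  have hdiag : update (update x j (x i)) i (x i) = update x j (x i) := by
    rw [update_comm hij.symm, update_eq_self]
  simpa [hdiag] using h

/-- For a symmetric lattice n-homomorphism,
T(x₁,x₁,x₃,...,xₙ) ⊓ T(x₂,x₂,x₃,...,xₙ) ≤ T(x₁,...,xₙ)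
  ≤ T(x₁,x₁,x₃,...,xₙ) ⊔ T(x₂,x₂,x₃,...,xₙ). -/
theorem symm_multiHom_between {L M : Type*} [DistribLattice L] [DistribLattice M]
    {n : ℕ} (hn : 2 ≤ n) (T : (Fin n → L) → M) (hT : IsLatticeMultiHom T)
    (hsymm : IsSymmetricMap T) (x : Fin n → L) :
    T (Function.update x ⟨1, by omega⟩ (x ⟨0, by omega⟩)) ⊓
        T (Function.update x ⟨0, by omega⟩ (x ⟨1, by omega⟩)) ≤ T x ∧
    T x ≤ T (Function.update x ⟨1, by omega⟩ (x ⟨0, by omega⟩)) ⊔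
        T (Function.update x ⟨0, by omega⟩ (x ⟨1, by omega⟩)) :=
  hT.inf_le_and_le_sup_of_isSymmetricMap hsymm (by simp [Fin.ext_iff]) x
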